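/- (C-regret via relaxation) Let 0 < C ≤ 1 and let F : X × Y → [0,1] satisfy C·f(x,y) ≤ F(x,y) ≤ f(x,y) for all x ∈ X and y ∈ Y. Suppose Γ is (κ,δ)-admissible with κ ≥ 1 and 0 < δ ≤ 1, let ε ≥ 0, set η = √(δ / ((1+2ε)Tκ)), let α = (α_1,…,α_N) have independent coordinates each uniformly distributed on [0, 1/η], and suppose that for every α the sequence x_1(α),…,x_{T+1}(α) is an ε-approximate Generalized-FTPL trajectory for α with respect to the payoff F (i.e., with F in place of f in the trajectory condition), with each map α ↦ x_t(α) measurable. Then E[ C·max_{x∈X} Σ_{t=1}^T f(x, y_t) − Σ_{t=1}^T f(x_t(α), y_t) ] ≤ 3N√((1+2ε)Tκ/δ) + εT. -/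

import Mathlib

/-!
Relaxation reduces the `C`-regret for `f` to the ordinary regret for `F`: with `x⋆` a best fixed
action for `f`, `C · Σ f(x⋆) ≤ Σ F(x⋆)` and `Σ F(x_t) ≤ Σ f(x_t)`. For `F`, the be-the-leader
argument bounds the regret of an approximate perturbed leader sequence by the range `N / η` of
the perturbation, plus `ε T`, plus the number of rounds with `x_t ≠ x_{t+1}`.

Since the rows of `Γ` are distinct, such a switch changes some column `j` of `Γ`. Fix every
coordinate of `α` except `α_j` and compare the leader conditions at two values `s, s'` of `α_j`:
the values at which column `j` switches away from a given value `v`, in a given direction, lie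
within `(1 + 2ε) / δ` of each other. With at most `κ` values and two directions, a switch in
column `j` has probability at most `2 κ η (1 + 2ε) / δ`. Summed over `N` columns and `T` rounds
this is `2 N / η` for the chosen `η`, so the total bound is `3 N / η + ε T`.
-/

open Finset MeasureTheory
open scoped ENNReal Matrix

section Leader

variable {X : Type*}

/-- In an FTPL trajectory, `x_{n+1}` is an approximate leader after `n` rounds. -/
def IsApproxLeader (r : ℕ → X → ℝ) (p : X → ℝ) (ε : ℝ) (n : ℕ) (x : X) : Prop :=
  ∀ x', ∑ τ ∈ Icc 1 n, r τ x' + p x' ≤ ∑ τ ∈ Icc 1 n, r τ x + p x + ε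

variable {r : ℕ → X → ℝ} {p p' : X → ℝ} {ε : ℝ}

theorem sum_add_le_of_isApproxLeader {B : ℝ} (hB : ∀ x, p x ≤ B) {x : ℕ → X} {T : ℕ}
    (hlead : ∀ n ∈ Icc 1 T, IsApproxLeader r p ε n (x (n + 1))) (x' : X) :
    ∑ t ∈ Icc 1 T, r t x' + p x' ≤ ∑ t ∈ Icc 1 T, r t (x (t + 1)) + B + T * ε := by
  induction T generalizing x' with
  | zero => simpa using hB x'
  | succ T ih =>
    have hprev := ih (fun n hn => hlead n (Icc_subset_Icc_right T.le_succ hn)) (x (T + 2))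
    have hlast := hlead (T + 1) (right_mem_Icc.2 (by omega)) x'
    simp only [sum_Icc_succ_top (by omega : 1 ≤ T + 1)] at hlast ⊢
    push_cast
    linarith

theorem sum_sub_sum_le_of_isApproxLeader [DecidableEq X] (hr : ∀ t x, r t x ∈ Set.Icc 0 1) {B : ℝ}
    (hp0 : ∀ x, 0 ≤ p x) (hpB : ∀ x, p x ≤ B) {x : ℕ → X} {T : ℕ}
    (hlead : ∀ n ∈ Icc 1 T, IsApproxLeader r p ε n (x (n + 1))) (x' : X) :
    ∑ t ∈ Icc 1 T, r t x' - ∑ t ∈ Icc 1 T, r t (x t) ≤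
      B + T * ε + ∑ t ∈ Icc 1 T, if x t ≠ x (t + 1) then 1 else 0 := by
  have hbtl := sum_add_le_of_isApproxLeader hpB hlead x'
  have hstab : ∑ t ∈ Icc 1 T, r t (x (t + 1)) - ∑ t ∈ Icc 1 T, r t (x t) ≤
      ∑ t ∈ Icc 1 T, if x t ≠ x (t + 1) then 1 else 0 := by
    rw [← sum_sub_distrib]
    refine sum_le_sum fun t _ => ?_
    split_ifs with h
    · linarith [(hr t (x (t + 1))).2, (hr t (x t)).1]
    · rw [not_not.1 h, sub_self]
  linarith [hp0 x']

theorem IsApproxLeader.sub_sub_sub_le {n : ℕ} {a b : X} (ha : IsApproxLeader r p' ε n a)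
    (hb : IsApproxLeader r p ε (n + 1) b) :
    p' b - p b - (p' a - p a) ≤ r (n + 1) b - r (n + 1) a + 2 * ε := by
  have h₁ := ha b
  have h₂ := hb a
  rw [sum_Icc_succ_top (by omega), sum_Icc_succ_top (by omega)] at h₂
  linarith

end Leader

theorem mul_sup'_sub_sum_le_of_isApproxLeader {X Y : Type*} [Fintype X] [Nonempty X]
    [DecidableEq X] {f F : X → Y → ℝ} {C : ℝ} (hrelax : ∀ x y, C * f x y ≤ F x y ∧ F x y ≤ f x y)
    (hF : ∀ x y, F x y ∈ Set.Icc 0 1) (y : ℕ → Y) {p : X → ℝ} {B ε : ℝ} (hp0 : ∀ x, 0 ≤ p x)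
    (hpB : ∀ x, p x ≤ B) {x : ℕ → X} {T : ℕ}
    (hlead : ∀ n ∈ Icc 1 T, IsApproxLeader (fun τ x => F x (y τ)) p ε n (x (n + 1))) :
    C * univ.sup' univ_nonempty (fun x => ∑ t ∈ Icc 1 T, f x (y t)) -
        ∑ t ∈ Icc 1 T, f (x t) (y t) ≤
      B + T * ε + ∑ t ∈ Icc 1 T, if x t ≠ x (t + 1) then 1 else 0 := by
  obtain ⟨xbest, -, hxbest⟩ :=
    exists_mem_eq_sup' univ_nonempty fun x => ∑ t ∈ Icc 1 T, f x (y t)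
  have hregret := sum_sub_sum_le_of_isApproxLeader (fun t x => hF x (y t)) hp0 hpB hlead xbest
  have hbest : C * ∑ t ∈ Icc 1 T, f xbest (y t) ≤ ∑ t ∈ Icc 1 T, F xbest (y t) := by
    rw [mul_sum]
    exact sum_le_sum fun t _ => (hrelax _ _).1
  have hplayed : ∑ t ∈ Icc 1 T, F (x t) (y t) ≤ ∑ t ∈ Icc 1 T, f (x t) (y t) :=
    sum_le_sum fun t _ => (hrelax _ _).2
  rw [hxbest]
  linarith

theorem update_dotProduct_sub_update_dotProduct {ι : Type*} [Fintype ι] [DecidableEq ι]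
    (β v : ι → ℝ) (j : ι) (s s' : ℝ) :
    Function.update β j s' ⬝ᵥ v - Function.update β j s ⬝ᵥ v = (s' - s) * v j := by
  rw [← sub_dotProduct, ← Function.update_sub, sub_self]
  exact single_dotProduct v (s' - s) j

theorem IsApproxLeader.sub_mul_sub_le {X ι : Type*} [Fintype ι] [DecidableEq ι] {r : ℕ → X → ℝ}
    (hr : ∀ t x, r t x ∈ Set.Icc 0 1) {Γ : X → ι → ℝ} {β : ι → ℝ} {j : ι} {s s' ε : ℝ} {n : ℕ}
    {a b : X} (ha : IsApproxLeader r (Function.update β j s' ⬝ᵥ Γ ·) ε n a)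
    (hb : IsApproxLeader r (Function.update β j s ⬝ᵥ Γ ·) ε (n + 1) b) :
    (s' - s) * (Γ b j - Γ a j) ≤ 1 + 2 * ε := by
  have h := ha.sub_sub_sub_le hb
  simp only [update_dotProduct_sub_update_dotProduct] at h
  linarith [(hr (n + 1) b).2, (hr (n + 1) a).1]

theorem dotProduct_mem_Icc {ι : Type*} [Fintype ι] {α v : ι → ℝ} {R : ℝ}
    (hα : ∀ j, α j ∈ Set.Icc 0 R) (hv : ∀ j, v j ∈ Set.Icc 0 1) :
    α ⬝ᵥ v ∈ Set.Icc 0 (Fintype.card ι * R) := by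
  refine ⟨sum_nonneg fun j _ => mul_nonneg (hα j).1 (hv j).1, ?_⟩
  calc α ⬝ᵥ v ≤ ∑ _j : ι, R :=
        sum_le_sum fun j _ => (mul_le_of_le_one_right (hα j).1 (hv j).2).trans (hα j).2
    _ = Fintype.card ι * R := by rw [sum_const, card_univ, nsmul_eq_mul]

theorem le_div_of_mul_le_of_le {x d c δ : ℝ} (hδ : 0 < δ) (hd : δ ≤ d) (hc : 0 ≤ c)
    (h : x * d ≤ c) : x ≤ c / δ := by
  rw [le_div_iff₀ hδ]
  rcases le_total x 0 with hx | hx <;> nlinarith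

theorem Real.volume_le_of_forall_sub_le {E : Set ℝ} {ρ : ℝ} (h : ∀ a ∈ E, ∀ b ∈ E, b - a ≤ ρ) :
    volume E ≤ ENNReal.ofReal ρ :=
  (Real.volume_le_diam E).trans <| Metric.ediam_le_of_forall_dist_le fun a ha b hb => by
    rw [Real.dist_eq, abs_le]
    constructor <;> linarith [h a ha b hb, h b hb a ha]

theorem Real.volume_setOf_ne_le {u w : ℝ → ℝ} {V : Finset ℝ} (hu : ∀ s, u s ∈ V) {δ c : ℝ}
    (hδ : 0 < δ) (hgap : ∀ s, u s ≠ w s → δ ≤ |w s - u s|)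
    (hkey : ∀ s s', u s' = u s → (s' - s) * (w s - u s) ≤ c) :
    volume {s | u s ≠ w s} ≤ #V * ENNReal.ofReal (2 * (c / δ)) := by
  have hc : 0 ≤ c := by simpa using hkey 0 0 rfl
  set up : ℝ → Set ℝ := fun v => {s | u s = v ∧ δ ≤ w s - u s}
  set down : ℝ → Set ℝ := fun v => {s | u s = v ∧ δ ≤ u s - w s}
  have hcover : {s | u s ≠ w s} ⊆ ⋃ v ∈ V, (up v ∪ down v) := by
    intro s hs
    simp only [Set.mem_iUnion, Set.mem_union]
    refine ⟨u s, hu s, ?_⟩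
    rcases le_abs'.1 (hgap s hs) with h | h
    · exact Or.inr ⟨rfl, by linarith⟩
    · exact Or.inl ⟨rfl, h⟩
  have hup : ∀ v, volume (up v) ≤ ENNReal.ofReal (c / δ) := fun v =>
    Real.volume_le_of_forall_sub_le fun a ha b hb =>
      le_div_of_mul_le_of_le hδ ha.2 hc (hkey a b (hb.1.trans ha.1.symm))
  have hdown : ∀ v, volume (down v) ≤ ENNReal.ofReal (c / δ) := fun v =>
    Real.volume_le_of_forall_sub_le fun a ha b hb =>
      le_div_of_mul_le_of_le hδ hb.2 hc (by linarith [hkey b a (ha.1.trans hb.1.symm)])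
  calc volume {s | u s ≠ w s} ≤ volume (⋃ v ∈ V, (up v ∪ down v)) := measure_mono hcover
    _ ≤ ∑ v ∈ V, volume (up v ∪ down v) := measure_biUnion_finset_le _ _
    _ ≤ ∑ _v ∈ V, ENNReal.ofReal (2 * (c / δ)) := by
      refine sum_le_sum fun v _ => (measure_union_le _ _).trans ?_
      rw [two_mul, ENNReal.ofReal_add (by positivity) (by positivity)]
      exact add_le_add (hup v) (hdown v)
    _ = #V * ENNReal.ofReal (2 * (c / δ)) := by rw [sum_const, nsmul_eq_mul]

theorem MeasureTheory.Measure.pi_le_of_forall_update_le {ι : Type*} [Fintype ι] [DecidableEq ι]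
    {E : ι → Type*} [∀ i, MeasurableSpace (E i)] {μ : ∀ i, Measure (E i)}
    [∀ i, IsProbabilityMeasure (μ i)] {A : Set (∀ i, E i)} (hA : MeasurableSet A) (j : ι)
    {c : ℝ≥0∞} (h : ∀ β, μ j (Function.update β j ⁻¹' A) ≤ c) : Measure.pi μ A ≤ c := by
  have hslice : ∫⋯∫⁻_{j}, A.indicator 1 ∂μ ≤ ∫⋯∫⁻_{j}, (fun _ => c) ∂μ := fun β => by
    simp only [lmarginal_singleton, lintegral_const, measure_univ, mul_one]
    calc _ = μ j (Function.update β j ⁻¹' A) :=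
          (lintegral_indicator_one (hA.preimage (measurable_update β))).symm ▸ rfl
      _ ≤ c := h β
  simpa [lintegral_indicator_one hA] using
    lintegral_le_of_lmarginal_le {j} (measurable_one.indicator hA) measurable_const hslice

section Switching

variable {X ι : Type*} [Fintype X] [MeasurableSpace X] [DiscreteMeasurableSpace X]
  [Fintype ι] [DecidableEq ι]
  {r : ℕ → X → ℝ} {Γ : X → ι → ℝ} {x : (ι → ℝ) → ℕ → X} {ν : Measure ℝ} [IsProbabilityMeasure ν]
  {ε δ η : ℝ} {κ n : ℕ}

theorem measure_column_switch_le (hr : ∀ t x, r t x ∈ Set.Icc 0 1) (hδ : 0 < δ) (hη : 0 ≤ η)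
    (hν : ∀ S, ν S ≤ ENNReal.ofReal η * volume S) (hx : ∀ t, Measurable (x · t))
    (hlead : ∀ α, ∀ m ∈ Icc n (n + 1), IsApproxLeader r (α ⬝ᵥ Γ ·) ε m (x α (m + 1)))
    (j : ι) (hcol : #(univ.image fun x => Γ x j) ≤ κ)
    (hgap : ∀ x x', Γ x j ≠ Γ x' j → δ ≤ |Γ x j - Γ x' j|) :
    Measure.pi (fun _ => ν) {α | Γ (x α (n + 1)) j ≠ Γ (x α (n + 2)) j} ≤
      ENNReal.ofReal (η * (κ * (2 * ((1 + 2 * ε) / δ)))) := by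
  have hΓj : Measurable (Γ · j) := .of_discrete
  have hmeas := (measurableSet_eq_fun (hΓj.comp (hx (n + 1))) (hΓj.comp (hx (n + 2)))).compl
  refine Measure.pi_le_of_forall_update_le (A := {α | Γ (x α (n + 1)) j ≠ Γ (x α (n + 2)) j})
    hmeas j fun β => ?_
  have hslice := Real.volume_setOf_ne_le (V := univ.image fun x => Γ x j)
    (u := fun s => Γ (x (Function.update β j s) (n + 1)) j)
    (w := fun s => Γ (x (Function.update β j s) (n + 2)) j) (c := 1 + 2 * ε)
    (fun s => mem_image_of_mem _ (mem_univ _)) hδ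
    (fun s hs => hgap _ _ (Ne.symm hs))
    (fun s s' hss' => hss' ▸ (hlead _ n (left_mem_Icc.2 n.le_succ)).sub_mul_sub_le hr
      (hlead _ (n + 1) (right_mem_Icc.2 n.le_succ)))
  calc ν (Function.update β j ⁻¹' {α | Γ (x α (n + 1)) j ≠ Γ (x α (n + 2)) j})
      ≤ ENNReal.ofReal η * (κ * ENNReal.ofReal (2 * ((1 + 2 * ε) / δ))) :=
        (hν _).trans (by gcongr; exact hslice.trans (by gcongr))
    _ = ENNReal.ofReal (η * (κ * (2 * ((1 + 2 * ε) / δ)))) := by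
        rw [ENNReal.ofReal_mul hη, ENNReal.ofReal_mul (Nat.cast_nonneg _), ENNReal.ofReal_natCast]

theorem measure_switch_le (hr : ∀ t x, r t x ∈ Set.Icc 0 1) (hδ : 0 < δ) (hη : 0 ≤ η)
    (hν : ∀ S, ν S ≤ ENNReal.ofReal η * volume S) (hx : ∀ t, Measurable (x · t))
    (hlead : ∀ α, ∀ m ∈ Icc n (n + 1), IsApproxLeader r (α ⬝ᵥ Γ ·) ε m (x α (m + 1)))
    (hinj : Function.Injective Γ) (hcol : ∀ j, #(univ.image fun x => Γ x j) ≤ κ)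
    (hgap : ∀ j x x', Γ x j ≠ Γ x' j → δ ≤ |Γ x j - Γ x' j|) :
    Measure.pi (fun _ => ν) {α | x α (n + 1) ≠ x α (n + 2)} ≤
      ENNReal.ofReal (Fintype.card ι * (η * (κ * (2 * ((1 + 2 * ε) / δ))))) :=
  calc Measure.pi (fun _ => ν) {α | x α (n + 1) ≠ x α (n + 2)}
      ≤ Measure.pi (fun _ => ν) (⋃ j, {α | Γ (x α (n + 1)) j ≠ Γ (x α (n + 2)) j}) :=
        measure_mono fun α hα => by simpa [Function.ne_iff] using hinj.ne hα
    _ ≤ ∑ j, Measure.pi (fun _ => ν) {α | Γ (x α (n + 1)) j ≠ Γ (x α (n + 2)) j} :=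
        measure_iUnion_fintype_le _ _
    _ ≤ ∑ _j : ι, ENNReal.ofReal (η * (κ * (2 * ((1 + 2 * ε) / δ)))) :=
        sum_le_sum fun j _ => measure_column_switch_le hr hδ hη hν hx hlead j (hcol j) (hgap j)
    _ = _ := by
        rw [sum_const, card_univ, nsmul_eq_mul, ENNReal.ofReal_mul (Nat.cast_nonneg _),
          ENNReal.ofReal_natCast]

end Switching

theorem isProbabilityMeasure_ofReal_smul_restrict_Icc {η : ℝ} (hη : 0 < η) :
    IsProbabilityMeasure (ENNReal.ofReal η • volume.restrict (Set.Icc (0 : ℝ) (1 / η))) := by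
  constructor
  rw [Measure.smul_apply, Measure.restrict_apply_univ, Real.volume_Icc, sub_zero, smul_eq_mul,
    ← ENNReal.ofReal_mul hη.le, mul_one_div_cancel hη.ne', ENNReal.ofReal_one]

theorem integral_le_add_card_mul_of_le_add_sum_indicator {Ω ι : Type*} [MeasurableSpace Ω]
    {μ : Measure Ω} [IsProbabilityMeasure μ] {G : Ω → ℝ} (hG : Integrable G μ) {S : ι → Set Ω}
    (hS : ∀ i, MeasurableSet (S i)) {s : Finset ι} {K c : ℝ}
    (hle : ∀ᵐ ω ∂μ, G ω ≤ K + ∑ i ∈ s, (S i).indicator 1 ω) (hc : ∀ i ∈ s, μ.real (S i) ≤ c) :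
    ∫ ω, G ω ∂μ ≤ K + #s * c := by
  have hind : ∀ i, Integrable ((S i).indicator 1) μ := fun i =>
    (integrable_const (1 : ℝ)).indicator (hS i)
  calc ∫ ω, G ω ∂μ ≤ ∫ ω, K + ∑ i ∈ s, (S i).indicator 1 ω ∂μ :=
        integral_mono_ae hG ((integrable_const K).add (integrable_finsetSum _ fun i _ => hind i))
          hle
    _ = K + ∑ i ∈ s, μ.real (S i) := by
        rw [integral_add (integrable_const K) (integrable_finsetSum _ fun i _ => hind i),
          integral_finsetSum _ fun i _ => hind i]
        simp [integral_indicator_one (hS _)]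
    _ ≤ K + #s * c := by
        grw [sum_le_card_nsmul s _ c hc, nsmul_eq_mul]

theorem div_sqrt_add_mul_sqrt_eq {Q δ : ℝ} (hQ : 0 < Q) (hδ : 0 < δ) (N : ℝ) :
    N / √(δ / Q) + 2 * N * (√(δ / Q) * (Q / δ)) = 3 * N * √(Q / δ) := by
  have hq2 : √(Q / δ) ^ 2 = Q / δ := Real.sq_sqrt (div_pos hQ hδ).le
  have hq : √(Q / δ) ≠ 0 := (Real.sqrt_pos.2 (div_pos hQ hδ)).ne'
  rw [← inv_div Q δ, Real.sqrt_inv]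
  generalize √(Q / δ) = q at hq2 hq ⊢
  rw [← hq2]
  field_simp
  ring

theorem integral_mul_sup'_sub_sum_le {X Y ι : Type*} [Fintype X] [Nonempty X] [MeasurableSpace X]
    [DiscreteMeasurableSpace X] [Fintype ι] [DecidableEq ι] {f F : X → Y → ℝ} {C : ℝ}
    (hrelax : ∀ x y, C * f x y ≤ F x y ∧ F x y ≤ f x y) (hF : ∀ x y, F x y ∈ Set.Icc 0 1)
    (y : ℕ → Y) {Γ : X → ι → ℝ} (hΓ : ∀ x j, Γ x j ∈ Set.Icc 0 1) (hinj : Function.Injective Γ)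
    {κ : ℕ} {δ : ℝ} (hδ : 0 < δ) (hcol : ∀ j, #(univ.image fun x => Γ x j) ≤ κ)
    (hgap : ∀ j x x', Γ x j ≠ Γ x' j → δ ≤ |Γ x j - Γ x' j|) {ε η : ℝ} (hε : 0 ≤ ε) (hη : 0 < η)
    {ν : Measure ℝ} [IsProbabilityMeasure ν] (hν : ∀ S, ν S ≤ ENNReal.ofReal η * volume S)
    (hνIcc : ∀ᵐ s ∂ν, s ∈ Set.Icc 0 (1 / η)) {x : (ι → ℝ) → ℕ → X} (hx : ∀ t, Measurable (x · t))
    {T : ℕ}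
    (hlead : ∀ α, ∀ n ≤ T, IsApproxLeader (fun τ x => F x (y τ)) (α ⬝ᵥ Γ ·) ε n (x α (n + 1))) :
    ∫ α, (C * univ.sup' univ_nonempty (fun x => ∑ t ∈ Icc 1 T, f x (y t)) -
        ∑ t ∈ Icc 1 T, f (x α t) (y t)) ∂Measure.pi (fun _ => ν) ≤
      Fintype.card ι * (1 / η) + T * ε +
        T * (Fintype.card ι * (η * (κ * (2 * ((1 + 2 * ε) / δ))))) := by
  classical
  have hbox : ∀ᵐ α ∂Measure.pi fun _ : ι => ν, ∀ j, α j ∈ Set.Icc 0 (1 / η) :=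
    ae_all_iff.2 fun j => Measure.tendsto_eval_ae_ae.eventually hνIcc
  rw [show (T : ℝ) = #(Icc 1 T) by simp]
  refine integral_le_add_card_mul_of_le_add_sum_indicator
    (S := fun t => {α | x α t ≠ x α (t + 1)}) ?_
    (fun t => (measurableSet_eq_fun (hx t) (hx (t + 1))).compl) ?_ ?_
  · exact (integrable_const _).sub (integrable_finsetSum _ fun t _ =>
      Integrable.of_finite.comp_measurable (g := (f · (y t))) (hx t))
  · filter_upwards [hbox] with α hα
    refine (mul_sup'_sub_sum_le_of_isApproxLeader hrelax hF y
      (fun x => (dotProduct_mem_Icc hα (hΓ x)).1) (fun x => (dotProduct_mem_Icc hα (hΓ x)).2)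
      (fun n hn => hlead α n (mem_Icc.1 hn).2)).trans_eq ?_
    simp [Set.indicator_apply]
  · intro t ht
    obtain ⟨n, rfl⟩ : ∃ n, t = n + 1 := ⟨t - 1, by grind⟩
    refine ENNReal.toReal_le_of_le_ofReal (by positivity) (measure_switch_le (n := n)
      (fun t x => hF x (y t)) hδ hη.le hν hx ?_ hinj hcol hgap)
    exact fun α m hm => hlead α m ((mem_Icc.1 hm).2.trans (mem_Icc.1 ht).2)

theorem c_regret_via_relaxation_general
    {X Y : Type*} [Fintype X] [Nonempty X]
    (f : X → Y → ℝ)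
    (C : ℝ)
    (F : X → Y → ℝ) (hF : ∀ x y, F x y ∈ Set.Icc (0:ℝ) 1)
    (hrelax : ∀ x y, C * f x y ≤ F x y ∧ F x y ≤ f x y)
    (T : ℕ) (hT : 1 ≤ T) (y : ℕ → Y)
    (N : ℕ)
    (Γ : X → Fin N → ℝ) (hΓ : ∀ x j, Γ x j ∈ Set.Icc (0:ℝ) 1)
    (κ : ℕ) (hκ : 1 ≤ κ) (δ : ℝ) (hδ0 : 0 < δ)
    -- (κ,δ)-admissibility of Γ:
    (hrows : ∀ x x' : X, x ≠ x' → ∃ j, Γ x j ≠ Γ x' j)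
    (hcol : ∀ j : Fin N, (Finset.univ.image fun x => Γ x j).card ≤ κ)
    (hgap : ∀ (j : Fin N) (x x' : X), Γ x j ≠ Γ x' j → δ ≤ |Γ x j - Γ x' j|)
    (ε : ℝ) (hε : 0 ≤ ε)
    (η : ℝ) (hη : η = Real.sqrt (δ / ((1 + 2*ε) * T * κ)))
    (D : Measure ℝ)
    (hD : D = ENNReal.ofReal η • volume.restrict (Set.Icc (0:ℝ) (1/η)))
    (xtraj : (Fin N → ℝ) → ℕ → X)
    (hmeas : ∀ (t : ℕ) (x₀ : X), MeasurableSet {α : Fin N → ℝ | xtraj α t = x₀})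
    -- ε-approximate Generalized-FTPL trajectory with respect to F:
    (htraj : ∀ (α : Fin N → ℝ) (t : ℕ), 1 ≤ t → t ≤ T + 1 → ∀ x' : X,
      (∑ τ ∈ Finset.Icc 1 (t-1), F (xtraj α t) (y τ)) + (∑ j, α j * Γ (xtraj α t) j) ≥
      (∑ τ ∈ Finset.Icc 1 (t-1), F x' (y τ)) + (∑ j, α j * Γ x' j) - ε) :
    ∫ α, (C * (Finset.univ.sup' Finset.univ_nonempty fun x => ∑ t ∈ Finset.Icc 1 T, f x (y t)) -
          ∑ t ∈ Finset.Icc 1 T, f (xtraj α t) (y t))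
        ∂(Measure.pi fun _ : Fin N => D) ≤
      3 * N * Real.sqrt ((1 + 2*ε) * T * κ / δ) + ε * T := by
  have hQ : (0 : ℝ) < (1 + 2 * ε) * T * κ :=
    mul_pos (mul_pos (by linarith) (by exact_mod_cast hT)) (by exact_mod_cast hκ)
  have hη0 : 0 < η := hη ▸ Real.sqrt_pos.2 (div_pos hδ0 hQ)
  have hDprob : IsProbabilityMeasure D := hD ▸ isProbabilityMeasure_ofReal_smul_restrict_Icc hη0
  have hDvol : ∀ S, D S ≤ ENNReal.ofReal η * volume S := fun S => by
    rw [hD, Measure.smul_apply, smul_eq_mul]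
    gcongr
    exact Measure.restrict_le_self
  have hinj : Function.Injective Γ := fun a b hab =>
    by_contra fun hne => (hrows a b hne).elim fun j hj => hj (congrFun hab j)
  -- On the discrete σ-algebra of `X`, `hmeas` says exactly that each `xtraj · t` is measurable.
  let _ : MeasurableSpace X := ⊤
  have hlead : ∀ α, ∀ n ≤ T,
      IsApproxLeader (fun τ x => F x (y τ)) (α ⬝ᵥ Γ ·) ε n (xtraj α (n + 1)) :=
    fun α n hn x' => by
      have h := htraj α (n + 1) (by omega) (by omega) x'
      rw [Nat.add_sub_cancel] at h
      exact sub_le_iff_le_add.1 h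
  calc _ ≤ N * (1 / η) + T * ε + T * (N * (η * (κ * (2 * ((1 + 2 * ε) / δ))))) := by
        simpa only [Fintype.card_fin] using integral_mul_sup'_sub_sum_le hrelax hF y hΓ hinj hδ0 hcol hgap hε hη0 hDvol
          (hD ▸ Measure.ae_smul_measure (ae_restrict_mem measurableSet_Icc) _)
          (fun t => measurable_to_countable' (hmeas t)) hlead
    _ = 3 * N * √((1 + 2 * ε) * T * κ / δ) + ε * T := by
        rw [hη]
        linear_combination div_sqrt_add_mul_sqrt_eq hQ hδ0 N

/-- **C-regret via relaxation.**
Let `0 < C ≤ 1` and let `F` satisfy `C·f(x,y) ≤ F(x,y) ≤ f(x,y)`. If `Γ` is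
`(κ,δ)`-admissible, `η = √(δ/((1+2ε)Tκ))`, the coordinates of `α` are i.i.d. uniform
on `[0,1/η]`, and `xtraj α` is an ε-approximate Generalized-FTPL trajectory with
respect to the relaxed payoff `F`, then
`E[ C·max_x Σ_t f(x,y_t) − Σ_t f(x_t(α),y_t) ] ≤ 3N√((1+2ε)Tκ/δ) + εT`. -/
theorem c_regret_via_relaxation
    {X Y : Type*} [Fintype X] [Nonempty X]
    (f : X → Y → ℝ) (hf : ∀ x y, f x y ∈ Set.Icc (0:ℝ) 1)
    (C : ℝ) (hC0 : 0 < C) (hC1 : C ≤ 1)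
    (F : X → Y → ℝ) (hF : ∀ x y, F x y ∈ Set.Icc (0:ℝ) 1)
    (hrelax : ∀ x y, C * f x y ≤ F x y ∧ F x y ≤ f x y)
    (T : ℕ) (hT : 1 ≤ T) (y : ℕ → Y)
    (N : ℕ) (hN : 1 ≤ N)
    (Γ : X → Fin N → ℝ) (hΓ : ∀ x j, Γ x j ∈ Set.Icc (0:ℝ) 1)
    (κ : ℕ) (hκ : 1 ≤ κ) (δ : ℝ) (hδ0 : 0 < δ) (hδ1 : δ ≤ 1)
    -- (κ,δ)-admissibility of Γ:
    (hrows : ∀ x x' : X, x ≠ x' → ∃ j, Γ x j ≠ Γ x' j)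
    (hcol : ∀ j : Fin N, (Finset.univ.image fun x => Γ x j).card ≤ κ)
    (hgap : ∀ (j : Fin N) (x x' : X), Γ x j ≠ Γ x' j → δ ≤ |Γ x j - Γ x' j|)
    (ε : ℝ) (hε : 0 ≤ ε)
    (η : ℝ) (hη : η = Real.sqrt (δ / ((1 + 2*ε) * T * κ)))
    (D : Measure ℝ)
    (hD : D = ENNReal.ofReal η • volume.restrict (Set.Icc (0:ℝ) (1/η)))
    (xtraj : (Fin N → ℝ) → ℕ → X)
    (hmeas : ∀ (t : ℕ) (x₀ : X), MeasurableSet {α : Fin N → ℝ | xtraj α t = x₀})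
    -- ε-approximate Generalized-FTPL trajectory with respect to F:
    (htraj : ∀ (α : Fin N → ℝ) (t : ℕ), 1 ≤ t → t ≤ T + 1 → ∀ x' : X,
      (∑ τ ∈ Finset.Icc 1 (t-1), F (xtraj α t) (y τ)) + (∑ j, α j * Γ (xtraj α t) j) ≥
      (∑ τ ∈ Finset.Icc 1 (t-1), F x' (y τ)) + (∑ j, α j * Γ x' j) - ε) :
    ∫ α, (C * (Finset.univ.sup' Finset.univ_nonempty fun x => ∑ t ∈ Finset.Icc 1 T, f x (y t)) -
          ∑ t ∈ Finset.Icc 1 T, f (xtraj α t) (y t))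
        ∂(Measure.pi fun _ : Fin N => D) ≤
      3 * N * Real.sqrt ((1 + 2*ε) * T * κ / δ) + ε * T :=
  c_regret_via_relaxation_general f C F hF hrelax T hT y N Γ hΓ κ hκ δ hδ0 hrows hcol hgap ε hε η hη
    D hD xtraj hmeas htraj
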